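/- arXiv:1105.4214 — 6 statements merged into one kernel-verified Lean document; each statement's English description precedes it below -/
import Mathlib

section
/- Let α ∈ (0,2] be a real number and let X and Y be independent, identically distributed real-valued random variables with E|X|^α < ∞. Then E|X − Y|^α ≤ E|X + Y|^α. -/
/-!
For `0 < α < 2` and real `z`, `∫₀^∞ (1 - cos (z t)) t^(-1-α) dt = c_α |z|^α` with
`c_α > 0`, so by Tonelli `E|Z|^α` is monotone in the function `t ↦ E[1 - cos (t Z)]`.
For i.i.d. `X`, `Y`,
`E cos (t (X - Y)) - E cos (t (X + Y)) = 2 E sin (t X) E sin (t Y) = 2 (E sin (t X))² ≥ 0`.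
For `α = 2` the same computation reads `E (X + Y)² - E (X - Y)² = 4 (E X)² ≥ 0`.
-/

open MeasureTheory ProbabilityTheory Real Set

lemma integrable_rpow_abs_iff_memLp {Ω : Type*} [MeasurableSpace Ω] {μ : Measure Ω}
    {f : Ω → ℝ} (hf : AEStronglyMeasurable f μ) {α : ℝ} (hα : 0 < α) :
    Integrable (fun ω => |f ω| ^ α) μ ↔ MemLp f (ENNReal.ofReal α) μ := by
  simpa [ENNReal.toReal_ofReal hα.le] using
    integrable_norm_rpow_iff hf (ENNReal.ofReal_pos.2 hα).ne' ENNReal.ofReal_ne_top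

section Kernel

variable {α : ℝ}

lemma one_sub_cos_mul_mul_rpow_le_sq (z : ℝ) {t : ℝ} (ht : 0 < t) :
    (1 - cos (z * t)) * t ^ (-1 - α) ≤ z ^ 2 / 2 * t ^ (1 - α) := by
  have hpow : t ^ (1 - α) = t ^ 2 * t ^ (-1 - α) := by
    rw [← rpow_two, ← rpow_add ht]; ring_nf
  rw [hpow]
  have := one_sub_sq_div_two_le_cos (x := z * t)
  nlinarith [rpow_nonneg ht.le (-1 - α)]

lemma integrableOn_Ioi_one_sub_cos_mul_mul_rpow (hα0 : 0 < α) (hα2 : α < 2) (z : ℝ) :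
    IntegrableOn (fun t => (1 - cos (z * t)) * t ^ (-1 - α)) (Ioi 0) := by
  have hmeas : AEStronglyMeasurable (fun t : ℝ => (1 - cos (z * t)) * t ^ (-1 - α)) :=
    (by fun_prop : Measurable _).aestronglyMeasurable
  have hnorm : ∀ t : ℝ, 0 < t → ‖(1 - cos (z * t)) * t ^ (-1 - α)‖ =
      (1 - cos (z * t)) * t ^ (-1 - α) := fun t ht =>
    norm_of_nonneg (mul_nonneg (by linarith [cos_le_one (z * t)]) (rpow_nonneg ht.le _))
  have hnear : IntegrableOn (fun t => (1 - cos (z * t)) * t ^ (-1 - α)) (Ioc 0 1) := by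
    have hdom : IntegrableOn (fun t : ℝ => z ^ 2 / 2 * t ^ (1 - α)) (Ioc 0 1) :=
      (((intervalIntegral.integrableOn_Ioo_rpow_iff one_pos).2 (by linarith)).congr_set_ae
        Ioo_ae_eq_Ioc.symm).const_mul _
    refine hdom.mono' hmeas.restrict ((ae_restrict_iff' measurableSet_Ioc).2
      (.of_forall fun t ht => ?_))
    rw [hnorm t ht.1]
    exact one_sub_cos_mul_mul_rpow_le_sq z ht.1
  have hfar : IntegrableOn (fun t => (1 - cos (z * t)) * t ^ (-1 - α)) (Ioi 1) := by
    have hdom : IntegrableOn (fun t : ℝ => 2 * t ^ (-1 - α)) (Ioi 1) :=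
      (integrableOn_Ioi_rpow_of_lt (by linarith) one_pos).const_mul 2
    refine hdom.mono' hmeas.restrict
      ((ae_restrict_iff' measurableSet_Ioi).2 (.of_forall fun t ht => ?_))
    rw [hnorm t (one_pos.trans ht)]
    exact mul_le_mul_of_nonneg_right (by linarith [neg_one_le_cos (z * t)])
      (rpow_nonneg (one_pos.trans ht).le _)
  simpa [Ioc_union_Ioi_eq_Ioi zero_le_one] using hnear.union hfar

lemma integral_Ioi_one_sub_cos_mul_mul_rpow (hα0 : 0 < α) (z : ℝ) :
    ∫ t in Ioi 0, (1 - cos (z * t)) * t ^ (-1 - α) =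
      |z| ^ α * ∫ t in Ioi 0, (1 - cos t) * t ^ (-1 - α) := by
  rcases eq_or_ne z 0 with rfl | hz
  · simp [zero_rpow hα0.ne']
  have hb : 0 < |z| := abs_pos.2 hz
  -- `cos` is even, so only `|z|` matters; then substitute `s = |z| t`.
  have hscale : ∀ t ∈ Ioi (0 : ℝ), (1 - cos (z * t)) * t ^ (-1 - α) =
      |z| ^ (1 + α) * ((1 - cos (t * |z|)) * (t * |z|) ^ (-1 - α)) := by
    intro t ht
    have hcos : cos (z * t) = cos (t * |z|) := by
      rw [← cos_abs (z * t), abs_mul, abs_of_pos (show (0 : ℝ) < t from ht), mul_comm]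
    have hcancel : |z| ^ (1 + α) * |z| ^ (-1 - α) = 1 := by
      rw [← rpow_add hb]; simp
    rw [hcos, mul_rpow (le_of_lt ht) hb.le]
    linear_combination (-(1 - cos (t * |z|)) * t ^ (-1 - α)) * hcancel
  rw [setIntegral_congr_fun measurableSet_Ioi hscale, integral_const_mul,
    integral_comp_mul_right_Ioi (fun s => (1 - cos s) * s ^ (-1 - α)) 0 hb, zero_mul,
    smul_eq_mul, ← mul_assoc, ← rpow_neg_one, ← rpow_add hb]
  ring_nf

lemma integral_Ioi_one_sub_cos_mul_rpow_pos (hα0 : 0 < α) (hα2 : α < 2) :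
    0 < ∫ t in Ioi 0, (1 - cos t) * t ^ (-1 - α) := by
  have hint := integrableOn_Ioi_one_sub_cos_mul_mul_rpow hα0 hα2 1
  simp only [one_mul] at hint
  rw [setIntegral_pos_iff_support_of_nonneg_ae ((ae_restrict_iff' measurableSet_Ioi).2
    (.of_forall fun t ht => mul_nonneg (by linarith [cos_le_one t])
      (rpow_nonneg (le_of_lt ht) _))) hint]
  have hsub : Ioo 0 (2 * π) ⊆
      Function.support (fun t => (1 - cos t) * t ^ (-1 - α)) ∩ Ioi 0 := by
    intro t ⟨ht0, ht2π⟩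
    refine ⟨mul_ne_zero ?_ (rpow_pos_of_pos ht0 _).ne', ht0⟩
    rw [sub_ne_zero, ne_comm, Ne, cos_eq_one_iff_of_lt_of_lt (by linarith [pi_pos]) ht2π]
    exact ht0.ne'
  exact (measure_mono hsub).trans_lt' (by simp [pi_pos])

lemma lintegral_Ioi_one_sub_cos_mul_mul_rpow (hα0 : 0 < α) (hα2 : α < 2) (z : ℝ) :
    ∫⁻ t in Ioi 0, ENNReal.ofReal ((1 - cos (z * t)) * t ^ (-1 - α)) =
      ENNReal.ofReal (|z| ^ α) * ENNReal.ofReal (∫ t in Ioi 0, (1 - cos t) * t ^ (-1 - α)) := by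
  rw [← ofReal_integral_eq_lintegral_ofReal
    (integrableOn_Ioi_one_sub_cos_mul_mul_rpow hα0 hα2 z)
    ((ae_restrict_iff' measurableSet_Ioi).2 (.of_forall fun t ht => mul_nonneg
      (by linarith [cos_le_one (z * t)]) (rpow_nonneg (le_of_lt ht) _))),
    integral_Ioi_one_sub_cos_mul_mul_rpow hα0 z, ENNReal.ofReal_mul (by positivity)]

end Kernel

section Comparison

variable {Ω : Type*} [MeasurableSpace Ω] {μ : Measure Ω} {α : ℝ}

lemma integrable_one_sub_cos_mul [IsFiniteMeasure μ] {Z : Ω → ℝ} (hZ : AEMeasurable Z μ)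
    (t : ℝ) : Integrable (fun ω => 1 - cos (Z ω * t)) μ :=
  .of_bound (by fun_prop) 2 (.of_forall fun ω => by
    rw [norm_eq_abs, abs_le]
    constructor <;> linarith [cos_le_one (Z ω * t), neg_one_le_cos (Z ω * t)])

lemma lintegral_rpow_abs_mul_eq_setLIntegral [IsFiniteMeasure μ] (hα0 : 0 < α) (hα2 : α < 2)
    {Z : Ω → ℝ} (hZ : Measurable Z) :
    (∫⁻ ω, ENNReal.ofReal (|Z ω| ^ α) ∂μ) *
        ENNReal.ofReal (∫ t in Ioi 0, (1 - cos t) * t ^ (-1 - α)) =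
      ∫⁻ t in Ioi 0, ENNReal.ofReal (t ^ (-1 - α) * ∫ ω, (1 - cos (Z ω * t)) ∂μ) := by
  rw [← lintegral_mul_const _ (by fun_prop),
    lintegral_congr fun ω => (lintegral_Ioi_one_sub_cos_mul_mul_rpow hα0 hα2 (Z ω)).symm,
    lintegral_lintegral_swap (by fun_prop)]
  refine setLIntegral_congr_fun measurableSet_Ioi fun t ht => ?_
  rw [← ofReal_integral_eq_lintegral_ofReal
    ((integrable_one_sub_cos_mul hZ.aemeasurable t).mul_const _)
    (.of_forall fun ω => mul_nonneg (by linarith [cos_le_one (Z ω * t)])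
      (rpow_nonneg (le_of_lt ht) _)), integral_mul_const, mul_comm]

lemma integral_rpow_abs_le_of_integral_one_sub_cos_le [IsFiniteMeasure μ]
    (hα0 : 0 < α) (hα2 : α < 2) {Z W : Ω → ℝ} (hZ : Measurable Z) (hW : Measurable W)
    (hWint : Integrable (fun ω => |W ω| ^ α) μ)
    (h : ∀ t > 0, ∫ ω, (1 - cos (Z ω * t)) ∂μ ≤ ∫ ω, (1 - cos (W ω * t)) ∂μ) :
    ∫ ω, |Z ω| ^ α ∂μ ≤ ∫ ω, |W ω| ^ α ∂μ := by
  have hlint : ∫⁻ ω, ENNReal.ofReal (|Z ω| ^ α) ∂μ ≤ ∫⁻ ω, ENNReal.ofReal (|W ω| ^ α) ∂μ := by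
    have hC := ENNReal.ofReal_pos.2 (integral_Ioi_one_sub_cos_mul_rpow_pos hα0 hα2)
    refine (ENNReal.mul_le_mul_iff_left hC.ne' ENNReal.ofReal_ne_top).1 ?_
    rw [lintegral_rpow_abs_mul_eq_setLIntegral hα0 hα2 hZ,
      lintegral_rpow_abs_mul_eq_setLIntegral hα0 hα2 hW]
    refine setLIntegral_mono' measurableSet_Ioi fun t ht => ?_
    exact ENNReal.ofReal_le_ofReal
      (mul_le_mul_of_nonneg_left (h t ht) (rpow_nonneg (le_of_lt ht) _))
  rw [integral_eq_lintegral_of_nonneg_ae (.of_forall fun ω => by positivity)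
      (hZ.abs.pow_const α).aestronglyMeasurable,
    integral_eq_lintegral_of_nonneg_ae (.of_forall fun ω => by positivity)
      (hW.abs.pow_const α).aestronglyMeasurable]
  exact ENNReal.toReal_mono hWint.lintegral_lt_top.ne hlint

end Comparison

section Symmetrization

variable {Ω : Type*} [MeasurableSpace Ω] {μ : Measure Ω} {X Y : Ω → ℝ}

lemma integral_one_sub_cos_sub_mul_le_of_indepFun [IsFiniteMeasure μ]
    (hindep : IndepFun X Y μ) (hid : IdentDistrib X Y μ μ) (t : ℝ) :
    ∫ ω, (1 - cos ((X ω - Y ω) * t)) ∂μ ≤ ∫ ω, (1 - cos ((X ω + Y ω) * t)) ∂μ := by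
  have hXm := hid.aemeasurable_fst
  have hYm := hid.aemeasurable_snd
  have hsin : Measurable fun x : ℝ => sin (x * t) := by fun_prop
  have hsinX : Integrable (fun ω => sin (X ω * t)) μ :=
    .of_bound (by fun_prop) 1 (.of_forall fun ω => abs_sin_le_one _)
  have hsinY : Integrable (fun ω => sin (Y ω * t)) μ :=
    .of_bound (by fun_prop) 1 (.of_forall fun ω => abs_sin_le_one _)
  have hsin_eq : ∫ ω, sin (X ω * t) ∂μ = ∫ ω, sin (Y ω * t) ∂μ := (hid.comp hsin).integral_eq
  have hsin_indep := hindep.comp hsin hsin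
  have hsin_prod : Integrable (fun ω => sin (X ω * t) * sin (Y ω * t)) μ :=
    hsin_indep.integrable_mul hsinX hsinY
  have hsin_mul : ∫ ω, sin (X ω * t) * sin (Y ω * t) ∂μ =
      (∫ ω, sin (X ω * t) ∂μ) * ∫ ω, sin (Y ω * t) ∂μ :=
    hsin_indep.integral_mul_eq_mul_integral hsinX.1 hsinY.1
  have hcos : ∀ ω, 1 - cos ((X ω - Y ω) * t) =
      (1 - cos ((X ω + Y ω) * t)) - 2 * (sin (X ω * t) * sin (Y ω * t)) := fun ω => by
    rw [sub_mul, add_mul, cos_sub, cos_add]; ring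
  rw [integral_congr_ae (.of_forall hcos), integral_sub
    (integrable_one_sub_cos_mul (Z := fun ω => X ω + Y ω) (hXm.add hYm) t)
    (hsin_prod.const_mul 2), integral_const_mul, hsin_mul, ← hsin_eq]
  nlinarith [mul_self_nonneg (∫ ω, sin (X ω * t) ∂μ)]

lemma integral_sq_sub_le_integral_sq_add [IsFiniteMeasure μ] (hindep : IndepFun X Y μ)
    (hid : IdentDistrib X Y μ μ) (hX : MemLp X 2 μ) :
    ∫ ω, (X ω - Y ω) ^ 2 ∂μ ≤ ∫ ω, (X ω + Y ω) ^ 2 ∂μ := by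
  have hY : MemLp Y 2 μ := hid.memLp_iff.1 hX
  have hprod : Integrable (fun ω => X ω * Y ω) μ :=
    hindep.integrable_mul (hX.integrable one_le_two) (hY.integrable one_le_two)
  have hmul : ∫ ω, X ω * Y ω ∂μ = (∫ ω, X ω ∂μ) * ∫ ω, Y ω ∂μ :=
    hindep.integral_mul_eq_mul_integral hX.1 hY.1
  have hsq : ∀ ω, (X ω + Y ω) ^ 2 = (X ω - Y ω) ^ 2 + 4 * (X ω * Y ω) := fun ω => by ring
  rw [integral_congr_ae (.of_forall hsq), integral_add (f := fun ω => (X ω - Y ω) ^ 2)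
    (hX.sub hY).integrable_sq (hprod.const_mul 4),
    integral_const_mul, hmul, ← hid.integral_eq]
  nlinarith [mul_self_nonneg (∫ ω, X ω ∂μ)]

end Symmetrization

/-- Let `α ∈ (0,2]` and let `X, Y` be i.i.d. real random variables with
`E|X|^α < ∞`. Then `E|X−Y|^α ≤ E|X+Y|^α`. -/
theorem abs_diff_rpow_expectation_le_abs_add_rpow_expectation
    {Ω : Type*} [MeasurableSpace Ω] (μ : Measure Ω) [IsProbabilityMeasure μ]
    (X Y : Ω → ℝ) (hX : Measurable X) (hY : Measurable Y)
    (hindep : IndepFun X Y μ) (hid : IdentDistrib X Y μ μ)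
    (α : ℝ) (hα0 : 0 < α) (hα2 : α ≤ 2)
    (hmom : Integrable (fun ω => |X ω| ^ α) μ) :
    ∫ ω, |X ω - Y ω| ^ α ∂μ ≤ ∫ ω, |X ω + Y ω| ^ α ∂μ := by
  rcases hα2.lt_or_eq with hα2 | rfl
  · have hXp := (integrable_rpow_abs_iff_memLp hX.aestronglyMeasurable hα0).1 hmom
    have hS : Integrable (fun ω => |X ω + Y ω| ^ α) μ :=
      (integrable_rpow_abs_iff_memLp (hX.add hY).aestronglyMeasurable hα0).2
        (hXp.add (hid.memLp_iff.1 hXp))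
    exact integral_rpow_abs_le_of_integral_one_sub_cos_le hα0 hα2 (hX.sub hY) (hX.add hY) hS
      fun t _ => integral_one_sub_cos_sub_mul_le_of_indepFun hindep hid t
  · simp only [rpow_two, sq_abs] at hmom ⊢
    exact integral_sq_sub_le_integral_sq_add hindep hid
      ((memLp_two_iff_integrable_sq hX.aestronglyMeasurable).2 hmom)
end

section
/- Let X and Y be independent, identically distributed real-valued random variables with E|X| < ∞. Then E|X + Y| − E|X − Y| = 2 ∫₀^∞ [P(X > r) − P(X < −r)]² dr. In particular, E|X − Y| ≤ E|X + Y|. -/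
/-! For `r ≥ 0` the function `tailSign r s = 1{s > r} - 1{s < -r}` equals `sign s · 1{r < |s|}`, so
`∫₀^∞ tailSign r s · tailSign r t dr = sign s · sign t · min |s| |t| = (|s + t| - |s - t|) / 2`.
Substitute `s = X`, `t = Y` and swap the integrals (Fubini applies because the integrand is
dominated by `1{r < |X|}`, whose integral is `E|X|`). By independence and equal distribution,
`E[tailSign r X · tailSign r Y] = (E[tailSign r X])² = (P(X > r) - P(X < -r))²`. -/

open MeasureTheory ProbabilityTheory Set

noncomputable def tailSign (r s : ℝ) : ℝ := (Ioi r).indicator 1 s - (Iio (-r)).indicator 1 s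

lemma measurable_uncurry_tailSign : Measurable (Function.uncurry tailSign) :=
  (measurable_one.indicator (measurableSet_lt measurable_fst measurable_snd)).sub
    (measurable_one.indicator (measurableSet_lt measurable_snd measurable_fst.neg))

lemma measurable_tailSign (r : ℝ) : Measurable (tailSign r) :=
  measurable_uncurry_tailSign.comp measurable_prodMk_left

lemma abs_tailSign_le_indicator (r s : ℝ) : |tailSign r s| ≤ (Iio |s|).indicator 1 r := by
  unfold tailSign
  by_cases h1 : r < s <;> by_cases h2 : s < -r <;> by_cases h3 : r < |s| <;>
    simp [h1, h2, h3] <;> cases abs_cases s <;> linarith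

lemma abs_tailSign_le_one (r s : ℝ) : |tailSign r s| ≤ 1 := by
  unfold tailSign
  by_cases h1 : r < s <;> by_cases h2 : s < -r <;> simp [h1, h2]

lemma tailSign_of_nonneg {r : ℝ} (hr : 0 ≤ r) (s : ℝ) :
    tailSign r s = Real.sign s * (Iio |s|).indicator 1 r := by
  rcases lt_trichotomy s 0 with hs | rfl | hs
  · have : ¬ r < s := by linarith
    simp [tailSign, indicator_apply, Real.sign_of_neg hs, abs_of_neg hs, this, lt_neg, apply_ite]
  · simp [tailSign, not_lt.2 hr]
  · have : ¬ s < -r := by linarith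
    simp [tailSign, indicator_apply, Real.sign_of_pos hs, abs_of_pos hs, this]

lemma integral_Ioi_tailSign_mul_tailSign (s t : ℝ) :
    ∫ r in Ioi 0, tailSign r s * tailSign r t = Real.sign s * Real.sign t * min |s| |t| := by
  calc ∫ r in Ioi 0, tailSign r s * tailSign r t
      = ∫ r in Ioi 0, Real.sign s * Real.sign t * (Iio (min |s| |t|)).indicator 1 r := by
        refine setIntegral_congr_fun measurableSet_Ioi fun r hr => ?_
        rw [tailSign_of_nonneg (le_of_lt hr), tailSign_of_nonneg (le_of_lt hr), ← Iio_inter_Iio,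
          inter_indicator_one, Pi.mul_apply]
        ring
    _ = Real.sign s * Real.sign t * min |s| |t| := by
        rw [integral_const_mul, integral_indicator_one measurableSet_Iio,
          measureReal_restrict_apply measurableSet_Iio, Iio_inter_Ioi,
          Real.volume_real_Ioo_of_le (by positivity), sub_zero]

lemma abs_add_sub_abs_sub_eq_sign_mul_sign_mul_min (s t : ℝ) :
    |s + t| - |s - t| = 2 * (Real.sign s * Real.sign t * min |s| |t|) := by
  rcases lt_trichotomy s 0 with hs | rfl | hs <;> rcases lt_trichotomy t 0 with ht | rfl | ht <;>
    simp [*, Real.sign_of_neg, Real.sign_of_pos, abs_of_neg, abs_of_pos] <;>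
    grind [abs_cases]

lemma abs_add_sub_abs_sub_eq_integral (s t : ℝ) :
    |s + t| - |s - t| = 2 * ∫ r in Ioi 0, tailSign r s * tailSign r t := by
  rw [integral_Ioi_tailSign_mul_tailSign, abs_add_sub_abs_sub_eq_sign_mul_sign_mul_min]

section

variable {Ω : Type*} [MeasurableSpace Ω] {μ : Measure Ω} {X Y : Ω → ℝ}

lemma measure_prod_setOf_lt_abs_lt_top [SFinite μ] (hX : Measurable X) (hXi : Integrable X μ) :
    (μ.prod (volume.restrict (Ioi 0))) {p : Ω × ℝ | p.2 < |X p.1|} < ⊤ := by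
  have hA : MeasurableSet {p : Ω × ℝ | p.2 < |X p.1|} :=
    measurableSet_lt measurable_snd (hX.comp measurable_fst).abs
  rw [Measure.prod_apply hA]
  calc ∫⁻ ω, volume.restrict (Ioi 0) (Iio |X ω|) ∂μ = ∫⁻ ω, ‖X ω‖ₑ ∂μ := by
        refine lintegral_congr fun ω => ?_
        rw [Measure.restrict_apply measurableSet_Iio, Iio_inter_Ioi, Real.volume_Ioo, sub_zero,
          Real.enorm_eq_ofReal_abs]
    _ < ⊤ := hXi.2

lemma integrable_tailSign_mul_tailSign_prod [SFinite μ] (hX : Measurable X) (hY : Measurable Y)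
    (hXi : Integrable X μ) :
    Integrable (fun p : Ω × ℝ => tailSign p.2 (X p.1) * tailSign p.2 (Y p.1))
      (μ.prod (volume.restrict (Ioi 0))) := by
  have hA : MeasurableSet {p : Ω × ℝ | p.2 < |X p.1|} :=
    measurableSet_lt measurable_snd (hX.comp measurable_fst).abs
  have hdom : Integrable ({p : Ω × ℝ | p.2 < |X p.1|}.indicator 1)
      (μ.prod (volume.restrict (Ioi 0))) :=
    (integrable_indicator_iff hA).2
      (integrableOn_const (C := (1 : ℝ)) (measure_prod_setOf_lt_abs_lt_top hX hXi).ne)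
  have hmeas (Z : Ω → ℝ) (hZ : Measurable Z) : Measurable fun p : Ω × ℝ => tailSign p.2 (Z p.1) :=
    measurable_uncurry_tailSign.comp (measurable_snd.prodMk (hZ.comp measurable_fst))
  refine hdom.mono' ((hmeas X hX).mul (hmeas Y hY)).aestronglyMeasurable (ae_of_all _ fun p => ?_)
  rw [Real.norm_eq_abs, abs_mul]
  calc |tailSign p.2 (X p.1)| * |tailSign p.2 (Y p.1)|
      ≤ (Iio |X p.1|).indicator 1 p.2 * 1 :=
        mul_le_mul (abs_tailSign_le_indicator _ _) (abs_tailSign_le_one _ _) (abs_nonneg _)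
          (indicator_nonneg (fun _ _ => zero_le_one) _)
    _ = {p : Ω × ℝ | p.2 < |X p.1|}.indicator 1 p := mul_one _

lemma integral_abs_add_sub_abs_sub [SFinite μ] (hX : Measurable X) (hY : Measurable Y)
    (hXi : Integrable X μ) :
    ∫ ω, (|X ω + Y ω| - |X ω - Y ω|) ∂μ
      = 2 * ∫ r in Ioi 0, ∫ ω, tailSign r (X ω) * tailSign r (Y ω) ∂μ := by
  simp_rw [abs_add_sub_abs_sub_eq_integral]
  rw [integral_const_mul, integral_integral_swap (integrable_tailSign_mul_tailSign_prod hX hY hXi)]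

lemma integral_tailSign_comp [IsFiniteMeasure μ] (hX : Measurable X) (r : ℝ) :
    ∫ ω, tailSign r (X ω) ∂μ = μ.real {ω | r < X ω} - μ.real {ω | X ω < -r} := by
  have hint (S : Set ℝ) (hS : MeasurableSet S) : Integrable (S.indicator 1) (μ.map X) :=
    (integrable_indicator_iff hS).2 (integrableOn_const (C := (1 : ℝ)))
  rw [← integral_map hX.aemeasurable (measurable_tailSign r).aestronglyMeasurable]
  unfold tailSign
  rw [integral_sub (hint _ measurableSet_Ioi) (hint _ measurableSet_Iio),
    integral_indicator_one measurableSet_Ioi, integral_indicator_one measurableSet_Iio,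
    map_measureReal_apply hX measurableSet_Ioi, map_measureReal_apply hX measurableSet_Iio]
  rfl

lemma integral_tailSign_mul_tailSign_of_iid [IsFiniteMeasure μ] (hX : Measurable X)
    (hY : Measurable Y) (hindep : IndepFun X Y μ) (hid : IdentDistrib X Y μ μ) (r : ℝ) :
    ∫ ω, tailSign r (X ω) * tailSign r (Y ω) ∂μ
      = (μ.real {ω | r < X ω} - μ.real {ω | X ω < -r}) ^ 2 := by
  have hg := measurable_tailSign r
  have hYX : ∫ ω, tailSign r (Y ω) ∂μ = ∫ ω, tailSign r (X ω) ∂μ := (hid.comp hg).integral_eq.symm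
  rw [hindep.integral_fun_comp_mul_comp hX.aemeasurable hY.aemeasurable hg.aestronglyMeasurable
    hg.aestronglyMeasurable, hYX, integral_tailSign_comp hX, sq]

end

/-- For i.i.d. integrable real random variables `X, Y`,
`E|X+Y| − E|X−Y| = 2 ∫₀^∞ (P(X > r) − P(X < −r))² dr`;
in particular `E|X−Y| ≤ E|X+Y|`. -/
theorem expectation_abs_add_sub_expectation_abs_sub_eq
    {Ω : Type*} [MeasurableSpace Ω] (μ : Measure Ω) [IsProbabilityMeasure μ]
    (X Y : Ω → ℝ) (hX : Measurable X) (hY : Measurable Y)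
    (hindep : IndepFun X Y μ) (hid : IdentDistrib X Y μ μ)
    (hint : Integrable X μ) :
    (∫ ω, |X ω + Y ω| ∂μ) - ∫ ω, |X ω - Y ω| ∂μ
      = 2 * ∫ r in Set.Ioi (0 : ℝ),
          ((μ {ω | r < X ω}).toReal - (μ {ω | X ω < -r}).toReal) ^ 2
    ∧ ∫ ω, |X ω - Y ω| ∂μ ≤ ∫ ω, |X ω + Y ω| ∂μ := by
  have hYi : Integrable Y μ := hid.integrable_iff.mp hint
  have hformula : (∫ ω, |X ω + Y ω| ∂μ) - ∫ ω, |X ω - Y ω| ∂μ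
      = 2 * ∫ r in Set.Ioi (0 : ℝ),
          ((μ {ω | r < X ω}).toReal - (μ {ω | X ω < -r}).toReal) ^ 2 := by
    have hadd : Integrable (fun ω => |X ω + Y ω|) μ := (hint.add hYi).abs
    have hsub : Integrable (fun ω => |X ω - Y ω|) μ := (hint.sub hYi).abs
    rw [← integral_sub hadd hsub, integral_abs_add_sub_abs_sub hX hY hint]
    simp_rw [integral_tailSign_mul_tailSign_of_iid hX hY hindep hid, measureReal_def]
  refine ⟨hformula, sub_nonneg.1 ?_⟩
  rw [hformula]
  exact mul_nonneg zero_le_two (setIntegral_nonneg measurableSet_Ioi fun r _ => sq_nonneg _)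
end

section
/- Let X and Y be independent, identically distributed, essentially bounded real-valued random variables. Set M = sup{r : P(X < r) < 1} (the essential supremum of X) and m = sup{r : P(X < r) = 0} (the essential infimum of X). Then the essential supremum of |X − Y| equals M − m, the essential supremum of |X + Y| equals 2·max{|M|, |m|}, and consequently ess sup |X − Y| ≤ ess sup |X + Y|. -/
/-! The essential supremum of a sum of independent variables is the sum of the essential suprema:
values of each summand close to its essential supremum occur with positive probability, hence,
by independence, simultaneously. As `Y` has the law of `X`, both `X - Y` and `Y - X` thus have
essential supremum `M - m`, while `X + Y` and `-(X + Y)` have `2 M` and `-2 m`; the essential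
supremum of `|Z|` is the larger of those of `Z` and `-Z`. -/

open MeasureTheory ProbabilityTheory Filter

lemma max_add_self_neg_add_self {M m : ℝ} (h : m ≤ M) :
    max (M + M) (-m + -m) = 2 * max |M| |m| := by
  rw [abs_eq_max_neg, abs_eq_max_neg]
  grind

section

variable {Ω Ω' : Type*} [MeasurableSpace Ω] [MeasurableSpace Ω'] {μ : Measure Ω}

/-- Unlike `essSup f μ` on `ℝ`, this has no junk value when `f` is not essentially bounded. -/
def IsEssSup (μ : Measure Ω) (f : Ω → ℝ) (a : ℝ) : Prop :=
  (∀ᵐ ω ∂μ, f ω ≤ a) ∧ ∀ b < a, ∃ᵐ ω ∂μ, b < f ω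

namespace IsEssSup

variable {f g : Ω → ℝ} {a b : ℝ}

lemma neg_le [NeZero μ] (hf : IsEssSup μ f a) (hneg : IsEssSup μ (fun ω => -f ω) b) :
    -b ≤ a := by
  obtain ⟨ω, hle, hnegle⟩ := (hf.1.and hneg.1).exists
  linarith

lemma add (hfg : IndepFun f g μ) (hf : IsEssSup μ f a) (hg : IsEssSup μ g b) :
    IsEssSup μ (fun ω => f ω + g ω) (a + b) := by
  refine ⟨by filter_upwards [hf.1, hg.1] with ω hfω hgω using add_le_add hfω hgω, fun c hc => ?_⟩
  set δ := (a + b - c) / 2 with hδ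
  have hpos : μ (f ⁻¹' Set.Ioi (a - δ) ∩ g ⁻¹' Set.Ioi (b - δ)) ≠ 0 := by
    rw [hfg.measure_inter_preimage_eq_mul _ _ measurableSet_Ioi measurableSet_Ioi]
    exact mul_ne_zero (frequently_ae_iff.1 (hf.2 _ (by linarith)))
      (frequently_ae_iff.1 (hg.2 _ (by linarith)))
  refine frequently_ae_iff.2 fun h => hpos (measure_mono_null ?_ h)
  rintro ω ⟨hfω, hgω⟩
  simp only [Set.mem_preimage, Set.mem_Ioi] at hfω hgω
  show c < f ω + g ω
  linarith

lemma abs (hf : IsEssSup μ f a) (hneg : IsEssSup μ (fun ω => -f ω) b) :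
    IsEssSup μ (fun ω => |f ω|) (max a b) := by
  refine ⟨?_, fun c hc => ?_⟩
  · filter_upwards [hf.1, hneg.1] with ω h₁ h₂
    exact abs_le.2 ⟨by linarith [le_max_right a b], by linarith [le_max_left a b]⟩
  rcases lt_max_iff.1 hc with hca | hcb
  · exact (hf.2 c hca).mono fun ω h => h.trans_le (le_abs_self _)
  · exact (hneg.2 c hcb).mono fun ω h => h.trans_le (neg_le_abs _)

lemma eLpNorm_top_eq (h : IsEssSup μ (fun ω => |f ω|) a) : eLpNorm f ⊤ μ = ENNReal.ofReal a := by
  refine le_antisymm ?_ (le_of_forall_lt fun c hc => ?_)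
  · rw [eLpNorm_exponent_top]
    exact eLpNormEssSup_le_of_ae_bound (h.1.mono fun ω hω => by rwa [Real.norm_eq_abs])
  · have hc_top : c ≠ ⊤ := (hc.trans ENNReal.ofReal_lt_top).ne
    have hae : ∀ᵐ ω ∂μ, ‖f ω‖ₑ ≤ eLpNorm f ⊤ μ := by
      rw [eLpNorm_exponent_top]; exact ae_le_eLpNormEssSup
    obtain ⟨ω, hlt, hle⟩ :=
      ((h.2 _ (ENNReal.toReal_lt_of_lt_ofReal hc)).and_eventually hae).exists
    calc c = ENNReal.ofReal c.toReal := (ENNReal.ofReal_toReal hc_top).symm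
      _ < ENNReal.ofReal |f ω| :=
        ENNReal.ofReal_lt_ofReal_iff'.2 ⟨hlt, ENNReal.toReal_nonneg.trans_lt hlt⟩
      _ = ‖f ω‖ₑ := (Real.enorm_eq_ofReal_abs _).symm
      _ ≤ eLpNorm f ⊤ μ := hle

end IsEssSup

lemma ProbabilityTheory.IdentDistrib.isEssSup {ν : Measure Ω'} {f : Ω → ℝ} {g : Ω' → ℝ} {a : ℝ}
    (h : IdentDistrib f g μ ν) (hf : IsEssSup μ f a) : IsEssSup ν g a :=
  ⟨h.ae_snd measurableSet_Iic hf.1,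
    fun b hb hg => hf.2 b hb (h.symm.ae_snd measurableSet_Ioi.compl hg)⟩

section

variable {f : Ω → ℝ} {a C : ℝ}

lemma ae_le_of_forall_gt_ae_lt (h : ∀ r > a, ∀ᵐ ω ∂μ, f ω < r) : ∀ᵐ ω ∂μ, f ω ≤ a := by
  obtain ⟨u, -, hu_gt, hu_lim⟩ := exists_seq_strictAnti_tendsto a
  filter_upwards [ae_all_iff.2 fun n => h (u n) (hu_gt n)] with ω hω
  exact ge_of_tendsto' hu_lim fun n => (hω n).le

lemma isEssSup_sSup_setOf_frequently_le [NeZero μ] (hC : ∀ᵐ ω ∂μ, |f ω| ≤ C) :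
    IsEssSup μ f (sSup {r | ∃ᵐ ω ∂μ, r ≤ f ω}) := by
  have hbdd : BddAbove {r | ∃ᵐ ω ∂μ, r ≤ f ω} := ⟨C, fun r hr => by
    obtain ⟨ω, hrω, hCω⟩ := (hr.and_eventually hC).exists
    linarith [le_abs_self (f ω)]⟩
  refine ⟨ae_le_of_forall_gt_ae_lt fun r hr => ?_, fun b hb => ?_⟩
  · have hr' : r ∉ {r | ∃ᵐ ω ∂μ, r ≤ f ω} := fun hmem => (le_csSup hbdd hmem).not_gt hr
    simpa only [Set.mem_ofPred_eq, not_frequently, not_le] using hr'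
  · have hne : {r | ∃ᵐ ω ∂μ, r ≤ f ω}.Nonempty :=
      ⟨-C, (hC.mono fun ω hω => neg_le_of_abs_le hω).frequently⟩
    obtain ⟨r, hr, hbr⟩ := exists_lt_of_lt_csSup hne hb
    exact hr.mono fun ω hω => hbr.trans_le hω

lemma isEssSup_neg_sSup_setOf_ae_le [NeZero μ] (hC : ∀ᵐ ω ∂μ, |f ω| ≤ C) :
    IsEssSup μ (fun ω => -f ω) (-sSup {r | ∀ᵐ ω ∂μ, r ≤ f ω}) := by
  have hbdd : BddAbove {r | ∀ᵐ ω ∂μ, r ≤ f ω} := ⟨C, fun r hr => by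
    obtain ⟨ω, hrω, hCω⟩ := ((show ∀ᵐ ω ∂μ, r ≤ f ω from hr).and hC).exists
    linarith [le_abs_self (f ω)]⟩
  refine ⟨ae_le_of_forall_gt_ae_lt fun r hr => ?_, fun b hb => ?_⟩
  · have hne : {r | ∀ᵐ ω ∂μ, r ≤ f ω}.Nonempty := ⟨-C, hC.mono fun ω hω => neg_le_of_abs_le hω⟩
    obtain ⟨t, ht, hrt⟩ := exists_lt_of_lt_csSup hne (neg_lt.1 hr)
    exact (show ∀ᵐ ω ∂μ, t ≤ f ω from ht).mono fun ω hω => neg_lt.1 (hrt.trans_le hω)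
  · have hb' : -b ∉ {r | ∀ᵐ ω ∂μ, r ≤ f ω} := fun hmem =>
      (le_csSup hbdd hmem).not_gt (lt_neg.1 hb)
    simp only [Set.mem_ofPred_eq, not_eventually, not_le] at hb'
    exact hb'.mono fun ω hω => lt_neg.1 hω

lemma measure_lt_lt_one_iff_frequently_le [IsProbabilityMeasure μ] (hf : AEMeasurable f μ)
    (r : ℝ) : μ {ω | f ω < r} < 1 ↔ ∃ᵐ ω ∂μ, r ≤ f ω := by
  rw [prob_le_one.lt_iff_ne, ← measure_univ (μ := μ), ne_eq,
    ← ae_iff_measure_eq (p := fun ω => f ω < r) (hf.nullMeasurable measurableSet_Iio),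
    not_eventually]
  simp only [not_lt]

lemma measure_lt_eq_zero_iff_ae_le (r : ℝ) : μ {ω | f ω < r} = 0 ↔ ∀ᵐ ω ∂μ, r ≤ f ω := by
  simp only [ae_iff, not_le]

lemma MeasureTheory.MemLp.exists_ae_abs_le (hf : MemLp f ⊤ μ) : ∃ C, ∀ᵐ ω ∂μ, |f ω| ≤ C := by
  have hfin : eLpNormEssSup f μ ≠ ⊤ := by simpa [eLpNorm_exponent_top] using hf.2.ne
  refine ⟨(eLpNormEssSup f μ).toReal, (ae_le_eLpNormEssSup (f := f) (μ := μ)).mono fun ω hω => ?_⟩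
  simpa [Real.norm_eq_abs] using ENNReal.toReal_mono hfin hω

lemma isEssSup_sSup_measure_lt_lt_one [IsProbabilityMeasure μ] (hf : MemLp f ⊤ μ) :
    IsEssSup μ f (sSup {r | μ {ω | f ω < r} < 1}) := by
  obtain ⟨C, hC⟩ := hf.exists_ae_abs_le
  simpa only [measure_lt_lt_one_iff_frequently_le hf.aemeasurable] using
    isEssSup_sSup_setOf_frequently_le hC

lemma isEssSup_neg_sSup_measure_lt_eq_zero [NeZero μ] (hf : MemLp f ⊤ μ) :
    IsEssSup μ (fun ω => -f ω) (-sSup {r | μ {ω | f ω < r} = 0}) := by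
  obtain ⟨C, hC⟩ := hf.exists_ae_abs_le
  simpa only [measure_lt_eq_zero_iff_ae_le] using isEssSup_neg_sSup_setOf_ae_le hC

end

end

theorem eLpNormTop_sub_le_eLpNormTop_add_general
    {Ω : Type*} [MeasurableSpace Ω] (μ : Measure Ω) [IsProbabilityMeasure μ]
    (X Y : Ω → ℝ)
    (hindep : IndepFun X Y μ) (hid : IdentDistrib X Y μ μ)
    (hbddX : MemLp X ⊤ μ)
    (M m : ℝ)
    (hM : M = sSup {r : ℝ | μ {ω | X ω < r} < 1})
    (hm : m = sSup {r : ℝ | μ {ω | X ω < r} = 0}) :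
    eLpNorm (fun ω => X ω - Y ω) ⊤ μ = ENNReal.ofReal (M - m)
    ∧ eLpNorm (fun ω => X ω + Y ω) ⊤ μ = ENNReal.ofReal (2 * max |M| |m|)
    ∧ eLpNorm (fun ω => X ω - Y ω) ⊤ μ ≤ eLpNorm (fun ω => X ω + Y ω) ⊤ μ := by
  have hXM : IsEssSup μ X M := hM ▸ isEssSup_sSup_measure_lt_lt_one hbddX
  have hXm : IsEssSup μ (fun ω => -X ω) (-m) := hm ▸ isEssSup_neg_sSup_measure_lt_eq_zero hbddX
  have hYM : IsEssSup μ Y M := hid.isEssSup hXM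
  have hYm : IsEssSup μ (fun ω => -Y ω) (-m) := (hid.comp measurable_neg).isEssSup hXm
  have hindep_negY : IndepFun X (fun ω => -Y ω) μ := hindep.comp measurable_id measurable_neg
  have hindep_negX : IndepFun (fun ω => -X ω) Y μ := hindep.comp measurable_neg measurable_id
  have hindep_neg : IndepFun (fun ω => -X ω) (fun ω => -Y ω) μ :=
    hindep.comp measurable_neg measurable_neg
  have hmM : m ≤ M := by simpa only [neg_neg] using hXM.neg_le hXm
  have hsub : eLpNorm (fun ω => X ω - Y ω) ⊤ μ = ENNReal.ofReal (M - m) := by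
    have hsup : IsEssSup μ (fun ω => X ω - Y ω) (M - m) := by
      simpa only [← sub_eq_add_neg] using hXM.add hindep_negY hYm
    have hinf : IsEssSup μ (fun ω => -(X ω - Y ω)) (M - m) := by
      simpa only [neg_sub, neg_add_eq_sub] using hXm.add hindep_negX hYM
    simpa only [max_self] using (hsup.abs hinf).eLpNorm_top_eq
  have hadd : eLpNorm (fun ω => X ω + Y ω) ⊤ μ = ENNReal.ofReal (2 * max |M| |m|) := by
    have hinf : IsEssSup μ (fun ω => -(X ω + Y ω)) (-m + -m) := by
      simpa only [neg_add] using hXm.add hindep_neg hYm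
    rw [← max_add_self_neg_add_self hmM]
    exact ((hXM.add hindep hYM).abs hinf).eLpNorm_top_eq
  refine ⟨hsub, hadd, ?_⟩
  rw [hsub, hadd]
  exact ENNReal.ofReal_le_ofReal (by
    linarith [le_abs_self M, neg_abs_le m, le_max_left |M| |m|, le_max_right |M| |m|])

/-- For i.i.d. essentially bounded real random variables `X, Y`, with
`M = sup{r : P(X < r) < 1}` and `m = sup{r : P(X < r) = 0}`, one has
`‖X − Y‖_∞ = M − m`, `‖X + Y‖_∞ = 2 max{|M|,|m|}`, and hence
`‖X − Y‖_∞ ≤ ‖X + Y‖_∞`. -/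
theorem eLpNormTop_sub_le_eLpNormTop_add
    {Ω : Type*} [MeasurableSpace Ω] (μ : Measure Ω) [IsProbabilityMeasure μ]
    (X Y : Ω → ℝ) (hX : Measurable X) (hY : Measurable Y)
    (hindep : IndepFun X Y μ) (hid : IdentDistrib X Y μ μ)
    (hbddX : MemLp X ⊤ μ) (hbddY : MemLp Y ⊤ μ)
    (M m : ℝ)
    (hM : M = sSup {r : ℝ | μ {ω | X ω < r} < 1})
    (hm : m = sSup {r : ℝ | μ {ω | X ω < r} = 0}) :
    eLpNorm (fun ω => X ω - Y ω) ⊤ μ = ENNReal.ofReal (M - m)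
    ∧ eLpNorm (fun ω => X ω + Y ω) ⊤ μ = ENNReal.ofReal (2 * max |M| |m|)
    ∧ eLpNorm (fun ω => X ω - Y ω) ⊤ μ ≤ eLpNorm (fun ω => X ω + Y ω) ⊤ μ :=
  eLpNormTop_sub_le_eLpNormTop_add_general μ X Y hindep hid hbddX M m hM hm
end

section
/- For every real α ∈ (2, ∞) there exist independent, identically distributed real-valued random variables X and Y with E|X|^α < ∞ such that E|X − Y|^α > E|X + Y|^α. In particular, the inequality E|X−Y|^α ≤ E|X+Y|^α fails in general for α > 2. -/
/-!
Take `X, Y` i.i.d. with `P(X = x) = p`, `P(X = -y) = q = 1 - p`, where `0 < x < y` and the weights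
are balanced by `p (2x)^(α/2) = q (2y)^(α/2)`. Then both diagonal terms `p² (2x)^α` and
`q² (2y)^α` of `E|X + Y|^α` equal `pq (4xy)^(α/2)`, so with `β = α / 2 > 1`

  `E|X - Y|^α - E|X + Y|^α = 2pq (((x + y)²)^β - (4xy)^β - ((y - x)²)^β) > 0`,

because `(x + y)² = 4xy + (y - x)²` and `t ↦ t^β` is strictly superadditive.
-/

open MeasureTheory ProbabilityTheory Real unitInterval

theorem add_rpow_lt_rpow_add {a b p : ℝ} (ha : 0 < a) (hb : 0 < b) (hp : 1 < p) :
    a ^ p + b ^ p < (a + b) ^ p := by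
  have hab : 0 < a + b := by positivity
  calc a ^ p + b ^ p = a * a ^ (p - 1) + b * b ^ (p - 1) := by
        rw [rpow_sub_one ha.ne', rpow_sub_one hb.ne']; field_simp
    _ < a * (a + b) ^ (p - 1) + b * (a + b) ^ (p - 1) :=
        add_lt_add (mul_lt_mul_of_pos_left (rpow_lt_rpow ha.le (by linarith) (by linarith)) ha)
          (mul_lt_mul_of_pos_left (rpow_lt_rpow hb.le (by linarith) (by linarith)) hb)
    _ = (a + b) ^ p := by rw [← add_mul, rpow_sub_one hab.ne']; field_simp

theorem two_point_abs_add_rpow_lt_abs_sub_rpow {α x y p q : ℝ} (hα : 2 < α) (hx : 0 < x)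
    (hxy : x < y) (hp : 0 < p) (hq : 0 < q)
    (hpq : p * (2 * x) ^ (α / 2) = q * (2 * y) ^ (α / 2)) :
    p ^ 2 * (2 * x) ^ α + q ^ 2 * (2 * y) ^ α + 2 * p * q * (y - x) ^ α <
      2 * p * q * (x + y) ^ α := by
  have hy : 0 < y := hx.trans hxy
  have rpow_eq_rpow_half_sq {t : ℝ} (ht : 0 ≤ t) : t ^ α = (t ^ (α / 2)) ^ 2 := by
    rw [← rpow_natCast, ← rpow_mul ht]; ring_nf
  have rpow_eq_sq_rpow_half {t : ℝ} (ht : 0 ≤ t) : t ^ α = (t ^ 2) ^ (α / 2) := by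
    rw [← rpow_natCast, ← rpow_mul ht]; ring_nf
  have hprod : (2 * x) ^ (α / 2) * (2 * y) ^ (α / 2) = (4 * x * y) ^ (α / 2) := by
    rw [← mul_rpow (by linarith) (by linarith)]; ring_nf
  have hdiag_x : p ^ 2 * (2 * x) ^ α = p * q * (4 * x * y) ^ (α / 2) := by
    rw [rpow_eq_rpow_half_sq (by linarith), ← hprod]
    linear_combination (p * (2 * x) ^ (α / 2)) * hpq
  have hdiag_y : q ^ 2 * (2 * y) ^ α = p * q * (4 * x * y) ^ (α / 2) := by
    rw [rpow_eq_rpow_half_sq (by linarith), ← hprod]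
    linear_combination (-(q * (2 * y) ^ (α / 2))) * hpq
  have hsuper : (4 * x * y) ^ (α / 2) + ((y - x) ^ 2) ^ (α / 2) < ((x + y) ^ 2) ^ (α / 2) := by
    convert add_rpow_lt_rpow_add (by positivity : 0 < 4 * x * y)
      (by nlinarith : 0 < (y - x) ^ 2) (by linarith : 1 < α / 2) using 2
    ring
  rw [hdiag_x, hdiag_y, rpow_eq_sq_rpow_half (by linarith : 0 ≤ y - x),
    rpow_eq_sq_rpow_half (by linarith : 0 ≤ x + y)]
  nlinarith [mul_lt_mul_of_pos_left hsuper (by positivity : 0 < 2 * p * q)]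

section Bernoulli

variable {X Y E : Type*} [MeasurableSpace X] [MeasurableSpace Y]
  [MeasurableSingletonClass X] [MeasurableSingletonClass Y] [NormedAddCommGroup E]

theorem integrable_bernoulliMeasure_prod (x y : X) (x' y' : Y) (p p' : I) {f : X × Y → E}
    (hf : AEStronglyMeasurable f (Ber(x, y, p).prod Ber(x', y', p'))) :
    Integrable f (Ber(x, y, p).prod Ber(x', y', p')) :=
  (integrable_prod_iff hf).2
    ⟨ae_of_all _ fun _ ↦ integrable_bernoulliMeasure .., integrable_bernoulliMeasure ..⟩

variable [NormedSpace ℝ E] [CompleteSpace E] in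
theorem integral_bernoulliMeasure_prod (x y : X) (x' y' : Y) (p p' : I) {f : X × Y → E}
    (hf : AEStronglyMeasurable f (Ber(x, y, p).prod Ber(x', y', p'))) :
    ∫ z, f z ∂(Ber(x, y, p).prod Ber(x', y', p')) =
      (p : ℝ) • ((p' : ℝ) • f (x, x') + (1 - p' : ℝ) • f (x, y')) +
        (1 - p : ℝ) • ((p' : ℝ) • f (y, x') + (1 - p' : ℝ) • f (y, y')) := by
  rw [integral_prod f (integrable_bernoulliMeasure_prod x y x' y' p p' hf),
    integral_bernoulliMeasure, integral_bernoulliMeasure, integral_bernoulliMeasure]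

end Bernoulli

theorem identDistrib_fst_snd {Ω : Type*} [MeasurableSpace Ω] (μ : Measure Ω)
    [IsProbabilityMeasure μ] :
    IdentDistrib Prod.fst Prod.snd (μ.prod μ) (μ.prod μ) :=
  ⟨by fun_prop, by fun_prop, by simp [Measure.map_fst_prod, Measure.map_snd_prod]⟩

theorem integral_abs_add_rpow_lt_integral_abs_sub_rpow {α x y : ℝ} {p : I} (hα : 2 < α)
    (hx : 0 < x) (hxy : x < y) (hp₀ : 0 < (p : ℝ)) (hp₁ : (p : ℝ) < 1)
    (hpy : p * (2 * x) ^ (α / 2) = (1 - p) * (2 * y) ^ (α / 2)) :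
    ∫ ω, |ω.1 + ω.2| ^ α ∂(Ber(x, -y, p).prod Ber(x, -y, p)) <
      ∫ ω, |ω.1 - ω.2| ^ α ∂(Ber(x, -y, p).prod Ber(x, -y, p)) := by
  have hy : 0 < y := hx.trans hxy
  rw [integral_bernoulliMeasure_prod _ _ _ _ _ _ (by fun_prop : Measurable _).aestronglyMeasurable,
    integral_bernoulliMeasure_prod _ _ _ _ _ _ (by fun_prop : Measurable _).aestronglyMeasurable]
  have h₀ : |x + x| = 2 * x := by rw [abs_of_pos (by linarith)]; ring
  have h₁ : |x + -y| = y - x := by rw [abs_of_neg (by linarith)]; ring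
  have h₂ : |-y + x| = y - x := by rw [abs_of_neg (by linarith)]; ring
  have h₃ : |-y + -y| = 2 * y := by rw [abs_of_neg (by linarith)]; ring
  have h₄ : |x - -y| = x + y := by rw [abs_of_pos (by linarith)]; ring
  have h₅ : |-y - x| = x + y := by rw [abs_of_neg (by linarith)]; ring
  simp only [smul_eq_mul, h₀, h₁, h₂, h₃, h₄, h₅, sub_self, abs_zero,
    zero_rpow (by linarith : α ≠ 0)]
  nlinarith [two_point_abs_add_rpow_lt_abs_sub_rpow hα hx hxy hp₀ (sub_pos.2 hp₁) hpy]

/-- For every real `α > 2` there exist i.i.d. real random variables `X, Y`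
with `E|X|^α < ∞` such that `E|X − Y|^α > E|X + Y|^α`. -/
theorem exists_iid_expectation_abs_sub_rpow_gt (α : ℝ) (hα : 2 < α) :
    ∃ (Ω : Type) (_ : MeasurableSpace Ω) (μ : Measure Ω),
      IsProbabilityMeasure μ ∧
      ∃ X Y : Ω → ℝ, Measurable X ∧ Measurable Y ∧
        IndepFun X Y μ ∧ IdentDistrib X Y μ μ ∧
        Integrable (fun ω => |X ω| ^ α) μ ∧
        (∫ ω, |X ω + Y ω| ^ α ∂μ) < ∫ ω, |X ω - Y ω| ^ α ∂μ := by
  set p : I := ⟨2 / 3, by norm_num, by norm_num⟩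
  set y : ℝ := 2 ^ (2 / α)
  have hy : 1 < y := one_lt_rpow (by norm_num) (by positivity)
  have hpy : p * (2 * 1) ^ (α / 2) = (1 - p) * (2 * y) ^ (α / 2) := by
    rw [mul_one, mul_rpow zero_le_two (by positivity), ← rpow_mul zero_le_two,
      div_mul_div_cancel₀ (by linarith), div_self two_ne_zero, rpow_one]
    norm_num [p]
    ring
  set ν := Ber(1, -y, p)
  refine ⟨ℝ × ℝ, inferInstance, ν.prod ν, inferInstance, Prod.fst, Prod.snd, measurable_fst,
    measurable_snd, indepFun_prod measurable_id measurable_id, identDistrib_fst_snd ν,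
    integrable_bernoulliMeasure_prod _ _ _ _ _ _
      (by fun_prop : Measurable _).aestronglyMeasurable, ?_⟩
  exact integral_abs_add_rpow_lt_integral_abs_sub_rpow hα one_pos hy (by norm_num [p])
    (by norm_num [p]) hpy
end

section
/- Fix α ∈ (2,∞) and c > 0, and for M ≥ max{c, 1} set q = c/M, p = 1 − q. Let X_M, Y_M be i.i.d. random variables with P(X_M = 1) = p and P(X_M = −M) = q. Then E|X_M − Y_M|^α − E|X_M + Y_M|^α = 2pq[(M+1)^α − (M−1)^α] − 2^α M^α q² − 2^α p² ≥ M^{α−2}(4pαc − 2^α c²) − 2^α p². In particular, if c < 2^{2−α}α, then for all sufficiently large M one has E|X_M − Y_M|^α > E|X_M + Y_M|^α. -/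
open MeasureTheory ProbabilityTheory

/-- The law of a random variable taking value `1` with probability `p`
and value `-M` with probability `q`. -/
noncomputable def twoPointLaw (p q M : ℝ) : Measure ℝ :=
  ENNReal.ofReal p • Measure.dirac (1 : ℝ) + ENNReal.ofReal q • Measure.dirac (-M)

/-!
Independence turns each expectation into a four-term sum over the atoms of the product law,
which gives the identity. The lower bound comes from `(M+1)^α - (M-1)^α ≥ 2αM^(α-1)`,
obtained by integrating the tangent-line inequality of the convex function `t ↦ t^(α-1)`
over `[M-1, M+1]`. As `M → ∞` that bound grows like `M^(α-2) (4αc - 2^α c²)`, and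
`4αc - 2^α c² > 0` is exactly the condition `c < 2^(2-α) α`.
-/

open Filter Topology

theorem Real.rpow_add_mul_sub_le_rpow {r a t : ℝ} (hr : 1 ≤ r) (ha : 0 < a) (ht : 0 ≤ t) :
    a ^ r + r * a ^ (r - 1) * (t - a) ≤ t ^ r := by
  have hs : -1 ≤ t / a - 1 := by linarith [div_nonneg ht ha.le]
  have hbern := one_add_mul_self_le_rpow_one_add hs hr
  rw [add_sub_cancel, Real.div_rpow ht ha.le, le_div_iff₀ (by positivity)] at hbern
  calc a ^ r + r * a ^ (r - 1) * (t - a)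
      = (1 + r * (t / a - 1)) * a ^ r := by
        rw [Real.rpow_sub_one ha.ne']; field_simp
    _ ≤ t ^ r := hbern

theorem Real.two_mul_mul_rpow_sub_one_le_add_one_rpow_sub_sub_one_rpow {α M : ℝ}
    (hα : 2 ≤ α) (hM : 1 ≤ M) :
    2 * α * M ^ (α - 1) ≤ (M + 1) ^ α - (M - 1) ^ α := by
  have hα0 : 0 < α := by linarith
  have tangent : ∀ t ∈ Set.Icc (M - 1) (M + 1),
      M ^ (α - 1) + (α - 1) * M ^ (α - 1 - 1) * (t - M) ≤ t ^ (α - 1) := fun t ht =>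
    Real.rpow_add_mul_sub_le_rpow (by linarith) (by linarith) (by linarith [ht.1])
  have affine : ∫ t in (M - 1)..(M + 1), (M ^ (α - 1) + (α - 1) * M ^ (α - 1 - 1) * (t - M))
      = 2 * M ^ (α - 1) := by
    rw [intervalIntegral.integral_add intervalIntegrable_const
      (Continuous.intervalIntegrable (by fun_prop) _ _), intervalIntegral.integral_const_mul,
      intervalIntegral.integral_comp_sub_right (fun x => x)]
    simp only [intervalIntegral.integral_const, integral_id, smul_eq_mul]
    ring
  have hmono := intervalIntegral.integral_mono_on (by linarith : M - 1 ≤ M + 1)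
    (Continuous.intervalIntegrable (μ := volume) (by fun_prop) _ _)
    (intervalIntegral.intervalIntegrable_rpow (Or.inl (by linarith))) tangent
  rw [integral_rpow (Or.inl (by linarith)), sub_add_cancel, affine] at hmono
  linarith [(le_div_iff₀ hα0).1 hmono]

theorem ProbabilityTheory.IndepFun.integral_comp_eq_integral_prod {Ω α β E : Type*}
    [MeasurableSpace Ω] [MeasurableSpace α] [MeasurableSpace β]
    [NormedAddCommGroup E] [NormedSpace ℝ E] {μ : Measure Ω} [IsFiniteMeasure μ]
    {X : Ω → α} {Y : Ω → β}
    (hX : AEMeasurable X μ) (hY : AEMeasurable Y μ) (hXY : IndepFun X Y μ)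
    {f : α × β → E} (hf : StronglyMeasurable f) :
    ∫ ω, f (X ω, Y ω) ∂μ = ∫ z, f z ∂(μ.map X).prod (μ.map Y) := by
  rw [← hXY.map_prod_eq_prod_map_map hX hY, integral_map (hX.prodMk hY) hf.aestronglyMeasurable]

section TwoPointLaw

variable {p q M : ℝ} {E : Type*} [NormedAddCommGroup E]

instance (p q M : ℝ) : IsFiniteMeasure (twoPointLaw p q M) :=
  ⟨by simp [twoPointLaw]⟩

theorem integrable_twoPointLaw (f : ℝ → E) : Integrable f (twoPointLaw p q M) :=
  ((integrable_dirac enorm_lt_top).smul_measure ENNReal.ofReal_ne_top).add_measure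
    ((integrable_dirac enorm_lt_top).smul_measure ENNReal.ofReal_ne_top)

theorem integral_twoPointLaw [NormedSpace ℝ E] [CompleteSpace E] (hp : 0 ≤ p) (hq : 0 ≤ q)
    (f : ℝ → E) :
    ∫ x, f x ∂twoPointLaw p q M = p • f 1 + q • f (-M) := by
  have hdirac (a : ℝ) (r : ℝ) : Integrable f (ENNReal.ofReal r • Measure.dirac a) :=
    (integrable_dirac enorm_lt_top).smul_measure ENNReal.ofReal_ne_top
  rw [twoPointLaw, integral_add_measure (hdirac _ _) (hdirac _ _), integral_smul_measure,
    integral_smul_measure, integral_dirac, integral_dirac, ENNReal.toReal_ofReal hp,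
    ENNReal.toReal_ofReal hq]

variable {p' q' M' : ℝ}

theorem integrable_prod_twoPointLaw {f : ℝ × ℝ → E}
    (hf : AEStronglyMeasurable f ((twoPointLaw p q M).prod (twoPointLaw p' q' M'))) :
    Integrable f ((twoPointLaw p q M).prod (twoPointLaw p' q' M')) :=
  (integrable_prod_iff hf).2
    ⟨ae_of_all _ fun _ => integrable_twoPointLaw _, integrable_twoPointLaw _⟩

theorem integral_prod_twoPointLaw [NormedSpace ℝ E] [CompleteSpace E]
    (hp : 0 ≤ p) (hq : 0 ≤ q) (hp' : 0 ≤ p') (hq' : 0 ≤ q') {f : ℝ × ℝ → E}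
    (hf : AEStronglyMeasurable f ((twoPointLaw p q M).prod (twoPointLaw p' q' M'))) :
    ∫ z, f z ∂(twoPointLaw p q M).prod (twoPointLaw p' q' M')
      = p • (p' • f (1, 1) + q' • f (1, -M'))
        + q • (p' • f (-M, 1) + q' • f (-M, -M')) := by
  rw [integral_prod _ (integrable_prod_twoPointLaw hf), integral_twoPointLaw hp hq,
    integral_twoPointLaw hp' hq', integral_twoPointLaw hp' hq']

end TwoPointLaw

theorem integral_abs_sub_rpow_sub_integral_abs_add_rpow_of_twoPointLaw {Ω : Type*}
    [MeasurableSpace Ω] {μ : Measure Ω} [IsFiniteMeasure μ] {X Y : Ω → ℝ}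
    (hX : Measurable X) (hY : Measurable Y) (hXY : IndepFun X Y μ)
    {p q M α : ℝ} (hp : 0 ≤ p) (hq : 0 ≤ q) (hM : 1 ≤ M) (hα : 0 < α)
    (hmX : μ.map X = twoPointLaw p q M) (hmY : μ.map Y = twoPointLaw p q M) :
    (∫ ω, |X ω - Y ω| ^ α ∂μ) - ∫ ω, |X ω + Y ω| ^ α ∂μ
      = 2 * p * q * ((M + 1) ^ α - (M - 1) ^ α) - 2 ^ α * M ^ α * q ^ 2 - 2 ^ α * p ^ 2 := by
  have expectation (f : ℝ × ℝ → ℝ) (hf : Measurable f) :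
      ∫ ω, f (X ω, Y ω) ∂μ
        = p * (p * f (1, 1) + q * f (1, -M)) + q * (p * f (-M, 1) + q * f (-M, -M)) := by
    rw [hXY.integral_comp_eq_integral_prod hX.aemeasurable hY.aemeasurable hf.stronglyMeasurable,
      hmX, hmY, integral_prod_twoPointLaw hp hq hp hq hf.aestronglyMeasurable]
    simp only [smul_eq_mul]
  rw [expectation (fun z => |z.1 - z.2| ^ α) (by fun_prop),
    expectation (fun z => |z.1 + z.2| ^ α) (by fun_prop)]
  have h1 : |(1 : ℝ) - -M| = M + 1 := by rw [abs_of_nonneg (by linarith)]; ring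
  have h2 : |-M - (1 : ℝ)| = M + 1 := by rw [abs_of_nonpos (by linarith)]; ring
  have h3 : |(1 : ℝ) + -M| = M - 1 := by rw [abs_of_nonpos (by linarith)]; ring
  have h4 : |-M + (1 : ℝ)| = M - 1 := by rw [abs_of_nonpos (by linarith)]; ring
  have h5 : |-M + -M| ^ α = 2 ^ α * M ^ α := by
    rw [abs_of_nonpos (by linarith), ← Real.mul_rpow (by norm_num) (by linarith)]; ring_nf
  simp only [sub_self, abs_zero, Real.zero_rpow hα.ne', h1, h2, h3, h4, h5]
  norm_num
  ring

theorem rpow_sub_two_mul_le_two_mul_mul_div_mul_sub {α c M p : ℝ} (hα : 2 ≤ α) (hc : 0 ≤ c)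
    (hp : 0 ≤ p) (hM : 1 ≤ M) :
    M ^ (α - 2) * (4 * p * α * c - 2 ^ α * c ^ 2)
      ≤ 2 * p * (c / M) * ((M + 1) ^ α - (M - 1) ^ α) - 2 ^ α * M ^ α * (c / M) ^ 2 := by
  have hM0 : 0 < M := by linarith
  calc M ^ (α - 2) * (4 * p * α * c - 2 ^ α * c ^ 2)
      = 2 * p * (c / M) * (2 * α * M ^ (α - 1)) - 2 ^ α * M ^ α * (c / M) ^ 2 := by
        have e1 : M ^ (α - 1) = M ^ (α - 2) * M := by
          rw [← Real.rpow_add_one hM0.ne']; ring_nf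
        have e2 : M ^ α = M ^ (α - 2) * M ^ 2 := by
          rw [← Real.rpow_add_natCast hM0.ne']; norm_num
        rw [e1, e2]
        field_simp
        ring
    _ ≤ 2 * p * (c / M) * ((M + 1) ^ α - (M - 1) ^ α) - 2 ^ α * M ^ α * (c / M) ^ 2 := by
        gcongr
        exact Real.two_mul_mul_rpow_sub_one_le_add_one_rpow_sub_sub_one_rpow hα hM

theorem tendsto_rpow_sub_two_mul_sub_atTop {α c : ℝ} (hα : 2 < α) (hc : 0 < c)
    (hsmall : c < 2 ^ (2 - α) * α) :
    Tendsto (fun M : ℝ => M ^ (α - 2) * (4 * (1 - c / M) * α * c - 2 ^ α * c ^ 2)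
      - 2 ^ α * (1 - c / M) ^ 2) atTop atTop := by
  have hq : Tendsto (fun M : ℝ => c / M) atTop (𝓝 0) := tendsto_const_nhds.div_atTop tendsto_id
  have hpos : 0 < 4 * (1 - 0) * α * c - 2 ^ α * c ^ 2 := by
    rw [Real.rpow_sub two_pos, Real.rpow_two, div_mul_eq_mul_div,
      lt_div_iff₀ (by positivity)] at hsmall
    nlinarith
  have hp : Tendsto (fun M : ℝ => 1 - c / M) atTop (𝓝 (1 - 0)) := tendsto_const_nhds.sub hq
  have hlead := (tendsto_rpow_atTop (by linarith : 0 < α - 2)).atTop_mul_pos hpos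
    ((((hp.const_mul 4).mul_const α).mul_const c).sub_const (2 ^ α * c ^ 2))
  exact hlead.atTop_add ((hp.pow 2).const_mul (2 ^ α)).neg

theorem integral_abs_sub_rpow_sub_integral_abs_add_rpow_eq_and_ge {α c M : ℝ} (hα : 2 ≤ α)
    (hc : 0 ≤ c) (hM : max c 1 ≤ M) {Ω : Type*} [MeasurableSpace Ω] {μ : Measure Ω}
    [IsFiniteMeasure μ] {X Y : Ω → ℝ} (hX : Measurable X) (hY : Measurable Y)
    (hXY : IndepFun X Y μ) (hmX : μ.map X = twoPointLaw (1 - c / M) (c / M) M)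
    (hmY : μ.map Y = twoPointLaw (1 - c / M) (c / M) M) :
    (∫ ω, |X ω - Y ω| ^ α ∂μ) - ∫ ω, |X ω + Y ω| ^ α ∂μ
        = 2 * (1 - c / M) * (c / M) * ((M + 1) ^ α - (M - 1) ^ α)
          - 2 ^ α * M ^ α * (c / M) ^ 2 - 2 ^ α * (1 - c / M) ^ 2
      ∧ M ^ (α - 2) * (4 * (1 - c / M) * α * c - 2 ^ α * c ^ 2) - 2 ^ α * (1 - c / M) ^ 2
        ≤ (∫ ω, |X ω - Y ω| ^ α ∂μ) - ∫ ω, |X ω + Y ω| ^ α ∂μ := by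
  have hM1 : 1 ≤ M := le_of_max_le_right hM
  have hp : 0 ≤ 1 - c / M :=
    sub_nonneg.2 <| div_le_one_of_le₀ (le_of_max_le_left hM) (by linarith)
  rw [integral_abs_sub_rpow_sub_integral_abs_add_rpow_of_twoPointLaw hX hY hXY hp
    (by positivity) hM1 (by linarith) hmX hmY]
  exact ⟨rfl, by linarith [rpow_sub_two_mul_le_two_mul_mul_div_mul_sub hα hc hp hM1]⟩

/-- Fix `α > 2` and `c > 0`; for `M ≥ max{c,1}` set `q = c/M`, `p = 1 − q`, and let
`X_M, Y_M` be i.i.d. with `P(X_M = 1) = p`, `P(X_M = −M) = q`. Then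
`E|X_M−Y_M|^α − E|X_M+Y_M|^α = 2pq[(M+1)^α − (M−1)^α] − 2^α M^α q² − 2^α p²
  ≥ M^{α−2}(4pαc − 2^α c²) − 2^α p²`,
and if `c < 2^{2−α} α` then `E|X_M−Y_M|^α > E|X_M+Y_M|^α` for all large `M`. -/
theorem twoPoint_expectation_abs_sub_rpow_sub_abs_add_rpow (α c : ℝ)
    (hα : 2 < α) (hc : 0 < c) :
    (∀ M : ℝ, max c 1 ≤ M →
      ∀ (Ω : Type*) (_ : MeasurableSpace Ω) (μ : Measure Ω), IsProbabilityMeasure μ →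
        ∀ X Y : Ω → ℝ, Measurable X → Measurable Y → IndepFun X Y μ →
          Measure.map X μ = twoPointLaw (1 - c / M) (c / M) M →
          Measure.map Y μ = twoPointLaw (1 - c / M) (c / M) M →
          ((∫ ω, |X ω - Y ω| ^ α ∂μ) - ∫ ω, |X ω + Y ω| ^ α ∂μ
              = 2 * (1 - c / M) * (c / M) * ((M + 1) ^ α - (M - 1) ^ α)
                - 2 ^ α * M ^ α * (c / M) ^ 2 - 2 ^ α * (1 - c / M) ^ 2
            ∧ M ^ (α - 2) * (4 * (1 - c / M) * α * c - 2 ^ α * c ^ 2)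
                - 2 ^ α * (1 - c / M) ^ 2
              ≤ (∫ ω, |X ω - Y ω| ^ α ∂μ) - ∫ ω, |X ω + Y ω| ^ α ∂μ))
    ∧ (c < 2 ^ (2 - α) * α → ∃ M₀ : ℝ, ∀ M : ℝ, M₀ ≤ M → max c 1 ≤ M →
        ∀ (Ω : Type*) (_ : MeasurableSpace Ω) (μ : Measure Ω), IsProbabilityMeasure μ →
          ∀ X Y : Ω → ℝ, Measurable X → Measurable Y → IndepFun X Y μ →
            Measure.map X μ = twoPointLaw (1 - c / M) (c / M) M →
            Measure.map Y μ = twoPointLaw (1 - c / M) (c / M) M →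
            (∫ ω, |X ω + Y ω| ^ α ∂μ) < ∫ ω, |X ω - Y ω| ^ α ∂μ) := by
  refine ⟨fun M hM Ω _ μ _ X Y hX hY hXY hmX hmY =>
    integral_abs_sub_rpow_sub_integral_abs_add_rpow_eq_and_ge hα.le hc.le hM hX hY hXY hmX hmY,
    fun hsmall => ?_⟩
  obtain ⟨M₀, hM₀⟩ := eventually_atTop.1
    ((tendsto_rpow_sub_two_mul_sub_atTop hα hc hsmall).eventually_gt_atTop 0)
  refine ⟨M₀, fun M hM₀M hM Ω _ μ _ X Y hX hY hXY hmX hmY => sub_pos.1 ?_⟩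
  exact (hM₀ M hM₀M).trans_le
    (integral_abs_sub_rpow_sub_integral_abs_add_rpow_eq_and_ge hα.le hc.le hM hX hY hXY hmX hmY).2
end

section
/- Let a ≥ 0, b ≥ 0, and let μ be a measure on (0, ∞) satisfying ∫₀^∞ min(t, 1) μ(dt) < ∞. Define G : [0,∞) → [0,∞) by G(λ) = a + bλ + ∫₀^∞ (1 − e^{−tλ}) μ(dt), and set F(λ) = G(λ²). Then for any pair of independent, identically distributed real-valued random variables X and Y, one has E F(|X − Y|) ≤ E F(|X + Y|) (where both sides may equal +∞). -/
/-!
For `t ≥ 0` and i.i.d. `X, Y` one has `E e^{-t(X+Y)²} ≤ E e^{-t(X-Y)²}`: expanding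
`e^{-t(x-y)²} - e^{-t(x+y)²} = 2 e^{-tx²} e^{-ty²} sinh (2txy)` as `∑ cₙ φₙ(x) φₙ(y)` with `cₙ ≥ 0`,
independence turns its expectation into `∑ cₙ (E φₙ(X))² ≥ 0`. Integrating the resulting
inequality `E (1 - e^{-t(X-Y)²}) ≤ E (1 - e^{-t(X+Y)²})` against `μ` (Tonelli) handles the integral
part of `G`, and dividing it by `t` and letting `t → 0⁺` (Fatou) gives `E (X-Y)² ≤ E (X+Y)²`
for the linear part.
-/

open MeasureTheory ProbabilityTheory Filter Topology Set ENNReal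

namespace Real

lemma one_sub_exp_neg_mul_nonneg {s u : ℝ} (hs : 0 ≤ s) (hu : 0 ≤ u) :
    0 ≤ 1 - exp (-s * u) := by
  have : exp (-s * u) ≤ 1 := exp_le_one_iff.2 (by nlinarith)
  linarith

lemma one_sub_exp_neg_mul_le (s u : ℝ) : 1 - exp (-s * u) ≤ s * u := by
  rw [neg_mul]
  linarith [one_sub_le_exp_neg (s * u)]

lemma one_sub_exp_neg_mul_le_max_mul_min {t : ℝ} (ht : 0 ≤ t) (u : ℝ) :
    1 - exp (-t * u) ≤ max u 1 * min t 1 := by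
  rcases le_total t 1 with ht1 | ht1
  · rw [min_eq_left ht1]
    nlinarith [one_sub_exp_neg_mul_le t u, le_max_left u 1]
  · rw [min_eq_right ht1, mul_one]
    linarith [exp_pos (-t * u), le_max_right u 1]

lemma exp_neg_mul_sq_le_one {t : ℝ} (ht : 0 ≤ t) (x : ℝ) : exp (-t * x ^ 2) ≤ 1 :=
  exp_le_one_iff.2 (by nlinarith [sq_nonneg x])

lemma tendsto_inv_mul_one_sub_exp_neg_mul (u : ℝ) :
    Tendsto (fun s => s⁻¹ * (1 - exp (-s * u))) (𝓝[>] 0) (𝓝 u) := by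
  have h : HasDerivAt (fun s => 1 - exp (-s * u)) u 0 := by
    simpa using ((hasDerivAt_neg' (0 : ℝ)).mul_const u).exp.const_sub 1
  simpa using h.tendsto_slope_zero_right

end Real

theorem MeasureTheory.sFinite_of_lintegral_ne_top {α : Type*} [MeasurableSpace α] {μ : Measure α}
    {f : α → ℝ≥0∞} (hf : AEMeasurable f μ) (hf_ne_zero : ∀ᵐ x ∂μ, f x ≠ 0)
    (hf_int : ∫⁻ x, f x ∂μ ≠ ∞) : SFinite μ :=
  have := isFiniteMeasure_withDensity hf_int
  sFinite_of_absolutelyContinuous (withDensity_absolutelyContinuous' hf hf_ne_zero)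

section Fatou

variable {Ω : Type*} [MeasurableSpace Ω] {P : Measure Ω}

theorem lintegral_ofReal_le_of_forall_lintegral_one_sub_exp_le {U V : Ω → ℝ}
    (hU : AEMeasurable U P)
    (h : ∀ s, 0 < s → ∫⁻ ω, ENNReal.ofReal (1 - Real.exp (-s * U ω)) ∂P
      ≤ ∫⁻ ω, ENNReal.ofReal (1 - Real.exp (-s * V ω)) ∂P) :
    ∫⁻ ω, ENNReal.ofReal (U ω) ∂P ≤ ∫⁻ ω, ENNReal.ofReal (V ω) ∂P := by
  set q : ℝ → ℝ → ℝ≥0∞ := fun s u => ENNReal.ofReal (s⁻¹ * (1 - Real.exp (-s * u)))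
  have hq_lim (u : ℝ) : Tendsto (fun s => q s u) (𝓝[>] 0) (𝓝 (ENNReal.ofReal u)) :=
    (ENNReal.continuous_ofReal.tendsto u).comp (Real.tendsto_inv_mul_one_sub_exp_neg_mul u)
  have hq_le (s : ℝ) (hs : 0 < s) : ∫⁻ ω, q s (U ω) ∂P ≤ ∫⁻ ω, ENNReal.ofReal (V ω) ∂P := by
    calc ∫⁻ ω, q s (U ω) ∂P
        = ENNReal.ofReal s⁻¹ * ∫⁻ ω, ENNReal.ofReal (1 - Real.exp (-s * U ω)) ∂P := by
          rw [← lintegral_const_mul' _ _ ofReal_ne_top]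
          simp only [q, ENNReal.ofReal_mul (inv_nonneg.2 hs.le)]
      _ ≤ ENNReal.ofReal s⁻¹ * ∫⁻ ω, ENNReal.ofReal (1 - Real.exp (-s * V ω)) ∂P :=
          mul_le_mul_right (h s hs) _
      _ = ∫⁻ ω, q s (V ω) ∂P := by
          rw [← lintegral_const_mul' _ _ ofReal_ne_top]
          simp only [q, ENNReal.ofReal_mul (inv_nonneg.2 hs.le)]
      _ ≤ ∫⁻ ω, ENNReal.ofReal (V ω) ∂P := by
          refine lintegral_mono fun ω => ENNReal.ofReal_le_ofReal ?_
          rw [inv_mul_le_iff₀ hs]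
          exact Real.one_sub_exp_neg_mul_le s (V ω)
  calc ∫⁻ ω, ENNReal.ofReal (U ω) ∂P
      = ∫⁻ ω, liminf (fun s => q s (U ω)) (𝓝[>] 0) ∂P :=
        lintegral_congr fun ω => ((hq_lim (U ω)).liminf_eq).symm
    _ ≤ liminf (fun s => ∫⁻ ω, q s (U ω) ∂P) (𝓝[>] 0) :=
        lintegral_liminf_le' fun s => by fun_prop
    _ ≤ ∫⁻ ω, ENNReal.ofReal (V ω) ∂P :=
        liminf_le_of_frequently_le'
          (Eventually.frequently (f := 𝓝[>] (0 : ℝ)) (eventually_mem_nhdsWithin.mono hq_le))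

end Fatou

noncomputable def bernsteinFun (a b : ℝ) (μ : Measure ℝ) (u : ℝ) : ℝ :=
  a + b * u + ∫ t in Ioi 0, (1 - Real.exp (-t * u)) ∂μ

section Bernstein

variable {μ : Measure ℝ} (hμ : ∫⁻ t in Ioi (0 : ℝ), ENNReal.ofReal (min t 1) ∂μ ≠ ⊤)
include hμ

lemma sFinite_restrict_Ioi_of_lintegral_min_ne_top : SFinite (μ.restrict (Ioi 0)) := by
  refine sFinite_of_lintegral_ne_top (by fun_prop) ?_ hμ
  filter_upwards [ae_restrict_mem measurableSet_Ioi] with t (ht : 0 < t)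
  simpa using ht

lemma integrableOn_one_sub_exp_neg_mul {u : ℝ} (hu : 0 ≤ u) :
    IntegrableOn (fun t => 1 - Real.exp (-t * u)) (Ioi 0) μ := by
  have hmin : IntegrableOn (fun t => min t 1) (Ioi 0) μ := by
    refine ⟨by fun_prop, (hasFiniteIntegral_iff_ofReal ?_).2 hμ.lt_top⟩
    filter_upwards [ae_restrict_mem measurableSet_Ioi] with t (ht : 0 < t)
    positivity
  refine (hmin.const_mul (max u 1)).mono' (by fun_prop) ?_
  filter_upwards [ae_restrict_mem measurableSet_Ioi] with t (ht : 0 < t)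
  rw [Real.norm_of_nonneg (Real.one_sub_exp_neg_mul_nonneg ht.le hu)]
  exact Real.one_sub_exp_neg_mul_le_max_mul_min ht.le u

variable {a b : ℝ} (ha : 0 ≤ a) (hb : 0 ≤ b)
include ha hb

lemma ofReal_bernsteinFun {u : ℝ} (hu : 0 ≤ u) :
    ENNReal.ofReal (bernsteinFun a b μ u) = ENNReal.ofReal a + ENNReal.ofReal b * ENNReal.ofReal u
      + ∫⁻ t in Ioi 0, ENNReal.ofReal (1 - Real.exp (-t * u)) ∂μ := by
  have h_nonneg : 0 ≤ᵐ[μ.restrict (Ioi 0)] fun t => 1 - Real.exp (-t * u) := by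
    filter_upwards [ae_restrict_mem measurableSet_Ioi] with t (ht : 0 < t)
    exact Real.one_sub_exp_neg_mul_nonneg ht.le hu
  rw [bernsteinFun, ENNReal.ofReal_add (by positivity) (integral_nonneg_of_ae h_nonneg),
    ENNReal.ofReal_add ha (by positivity), ENNReal.ofReal_mul hb,
    ofReal_integral_eq_lintegral_ofReal (integrableOn_one_sub_exp_neg_mul hμ hu) h_nonneg]

variable {Ω : Type*} [MeasurableSpace Ω] {P : Measure Ω} [SFinite P]

lemma lintegral_ofReal_bernsteinFun_comp {U : Ω → ℝ} (hU : AEMeasurable U P) (hU0 : ∀ ω, 0 ≤ U ω) :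
    ∫⁻ ω, ENNReal.ofReal (bernsteinFun a b μ (U ω)) ∂P
      = ∫⁻ _, ENNReal.ofReal a ∂P + ENNReal.ofReal b * ∫⁻ ω, ENNReal.ofReal (U ω) ∂P
        + ∫⁻ t in Ioi 0, ∫⁻ ω, ENNReal.ofReal (1 - Real.exp (-t * U ω)) ∂P ∂μ := by
  have := sFinite_restrict_Ioi_of_lintegral_min_ne_top hμ
  simp_rw [ofReal_bernsteinFun hμ ha hb (hU0 _)]
  rw [lintegral_add_right' _ (by fun_prop), lintegral_add_right' _ (by fun_prop),
    lintegral_const_mul' _ _ ofReal_ne_top, lintegral_lintegral_swap (by fun_prop)]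

theorem lintegral_ofReal_bernsteinFun_comp_le {U V : Ω → ℝ} (hU : AEMeasurable U P)
    (hV : AEMeasurable V P) (hU0 : ∀ ω, 0 ≤ U ω) (hV0 : ∀ ω, 0 ≤ V ω)
    (h : ∀ s, 0 < s → ∫⁻ ω, ENNReal.ofReal (1 - Real.exp (-s * U ω)) ∂P
      ≤ ∫⁻ ω, ENNReal.ofReal (1 - Real.exp (-s * V ω)) ∂P) :
    ∫⁻ ω, ENNReal.ofReal (bernsteinFun a b μ (U ω)) ∂P
      ≤ ∫⁻ ω, ENNReal.ofReal (bernsteinFun a b μ (V ω)) ∂P := by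
  rw [lintegral_ofReal_bernsteinFun_comp hμ ha hb hU hU0,
    lintegral_ofReal_bernsteinFun_comp hμ ha hb hV hV0]
  gcongr _ + ENNReal.ofReal b * ?_ + ?_
  · exact lintegral_ofReal_le_of_forall_lintegral_one_sub_exp_le hU h
  · exact setLIntegral_mono' measurableSet_Ioi fun s hs => h s hs

end Bernstein

section Kernel

variable {Ω α : Type*} [MeasurableSpace Ω] [MeasurableSpace α] {P : Measure Ω}
  [IsFiniteMeasure P] {X Y : Ω → α}

theorem integral_nonneg_of_hasSum_mul_of_indepFun_of_identDistrib
    (hindep : IndepFun X Y P) (hid : IdentDistrib X Y P P)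
    {K : α → α → ℝ} {c : ℕ → ℝ} {g : ℕ → α → ℝ} (hc : ∀ n, 0 ≤ c n)
    (hg : ∀ n, Measurable (g n)) (hK : ∀ x y, HasSum (fun n => c n * (g n x * g n y)) (K x y))
    {C : ℝ≥0∞} (hC : C ≠ ∞) (hbound : ∀ x y, ∑' n, ‖c n * (g n x * g n y)‖ₑ ≤ C) :
    0 ≤ ∫ ω, K (X ω) (Y ω) ∂P := by
  have hgX (n : ℕ) : AEMeasurable (fun ω => g n (X ω)) P :=
    (hg n).comp_aemeasurable hid.aemeasurable_fst
  have hgY (n : ℕ) : AEMeasurable (fun ω => g n (Y ω)) P :=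
    (hg n).comp_aemeasurable hid.aemeasurable_snd
  have hterm (n : ℕ) : ∫ ω, c n * (g n (X ω) * g n (Y ω)) ∂P = c n * (∫ ω, g n (X ω) ∂P) ^ 2 := by
    have hprod : ∫ ω, g n (X ω) * g n (Y ω) ∂P = (∫ ω, g n (X ω) ∂P) * ∫ ω, g n (Y ω) ∂P :=
      (hindep.comp (hg n) (hg n)).integral_fun_mul_eq_mul_integral
        (hgX n).aestronglyMeasurable (hgY n).aestronglyMeasurable
    have hsame : ∫ ω, g n (Y ω) ∂P = ∫ ω, g n (X ω) ∂P := (hid.comp (hg n)).integral_eq.symm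
    rw [integral_const_mul, hprod, hsame, sq]
  have hsummable : ∑' n, ∫⁻ ω, ‖c n * (g n (X ω) * g n (Y ω))‖ₑ ∂P ≠ ∞ := by
    rw [← lintegral_tsum (f := fun n ω => ‖c n * (g n (X ω) * g n (Y ω))‖ₑ)
      fun n => (((hgX n).mul (hgY n)).const_mul (c n)).enorm]
    exact ne_top_of_le_ne_top (mul_ne_top hC (measure_ne_top P univ))
      ((lintegral_mono fun ω => hbound (X ω) (Y ω)).trans_eq (lintegral_const C))
  calc 0 ≤ ∑' n, c n * (∫ ω, g n (X ω) ∂P) ^ 2 := tsum_nonneg fun n => by have := hc n; positivity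
    _ = ∑' n, ∫ ω, c n * (g n (X ω) * g n (Y ω)) ∂P := by simp only [hterm]
    _ = ∫ ω, ∑' n, c n * (g n (X ω) * g n (Y ω)) ∂P :=
      (integral_tsum (fun n => (((hgX n).mul (hgY n)).const_mul (c n)).aestronglyMeasurable)
        hsummable).symm
    _ = ∫ ω, K (X ω) (Y ω) ∂P := by simp only [fun ω => (hK (X ω) (Y ω)).tsum_eq]

end Kernel

open scoped Nat

namespace Real

lemma hasSum_exp_neg_mul_sub_sq_sub_exp_neg_mul_add_sq (t x y : ℝ) :
    HasSum (fun n => 2 * (2 * t) ^ (2 * n + 1) / (2 * n + 1)! *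
        (exp (-t * x ^ 2) * x ^ (2 * n + 1) * (exp (-t * y ^ 2) * y ^ (2 * n + 1))))
      (exp (-t * (x - y) ^ 2) - exp (-t * (x + y) ^ 2)) := by
  have hval : exp (-t * (x - y) ^ 2) - exp (-t * (x + y) ^ 2)
      = 2 * exp (-t * x ^ 2) * exp (-t * y ^ 2) * sinh (2 * t * x * y) := by
    have hsub : exp (-t * (x - y) ^ 2)
        = exp (-t * x ^ 2) * exp (-t * y ^ 2) * exp (2 * t * x * y) := by
      rw [← exp_add, ← exp_add]; ring_nf
    have hadd : exp (-t * (x + y) ^ 2)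
        = exp (-t * x ^ 2) * exp (-t * y ^ 2) * exp (-(2 * t * x * y)) := by
      rw [← exp_add, ← exp_add]; ring_nf
    rw [sinh_eq, hsub, hadd]
    ring
  rw [hval]
  exact ((hasSum_sinh (2 * t * x * y)).mul_left (2 * exp (-t * x ^ 2) * exp (-t * y ^ 2))).congr_fun
    fun n => by ring

/-- The norms of the terms at `(x, y)` are the terms at `(|x|, |y|)`. -/
lemma tsum_enorm_exp_neg_mul_sq_series_le_one {t : ℝ} (ht : 0 ≤ t) (x y : ℝ) :
    ∑' n, ‖2 * (2 * t) ^ (2 * n + 1) / (2 * n + 1)! *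
        (exp (-t * x ^ 2) * x ^ (2 * n + 1) * (exp (-t * y ^ 2) * y ^ (2 * n + 1)))‖ₑ ≤ 1 := by
  have hS := hasSum_exp_neg_mul_sub_sq_sub_exp_neg_mul_add_sq t |x| |y|
  have hterm_nonneg (n : ℕ) : 0 ≤ 2 * (2 * t) ^ (2 * n + 1) / (2 * n + 1)! *
      (exp (-t * |x| ^ 2) * |x| ^ (2 * n + 1) * (exp (-t * |y| ^ 2) * |y| ^ (2 * n + 1))) := by
    positivity
  have hexp_le : exp (-t * (|x| - |y|) ^ 2) ≤ 1 := exp_le_one_iff.2 (by nlinarith)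
  calc ∑' n, ‖2 * (2 * t) ^ (2 * n + 1) / (2 * n + 1)! *
        (exp (-t * x ^ 2) * x ^ (2 * n + 1) * (exp (-t * y ^ 2) * y ^ (2 * n + 1)))‖ₑ
      = ∑' n, ENNReal.ofReal (2 * (2 * t) ^ (2 * n + 1) / (2 * n + 1)! *
        (exp (-t * |x| ^ 2) * |x| ^ (2 * n + 1) * (exp (-t * |y| ^ 2) * |y| ^ (2 * n + 1)))) := by
        congr 1 with n
        rw [enorm_eq_ofReal_abs, abs_mul, abs_mul, abs_mul, abs_mul, abs_of_nonneg (by positivity),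
          abs_of_pos (exp_pos _), abs_of_pos (exp_pos _), abs_pow, abs_pow, sq_abs, sq_abs]
    _ = ENNReal.ofReal (exp (-t * (|x| - |y|) ^ 2) - exp (-t * (|x| + |y|) ^ 2)) := by
        rw [← hS.tsum_eq, ENNReal.ofReal_tsum_of_nonneg hterm_nonneg hS.summable]
    _ ≤ 1 := ENNReal.ofReal_le_one.2 (by linarith [exp_pos (-t * (|x| + |y|) ^ 2)])

end Real

section Gaussian

variable {Ω : Type*} [MeasurableSpace Ω] {P : Measure Ω} [IsFiniteMeasure P] {X Y : Ω → ℝ}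

lemma integrable_exp_neg_mul_sq_comp {t : ℝ} (ht : 0 ≤ t) {W : Ω → ℝ} (hW : AEMeasurable W P) :
    Integrable (fun ω => Real.exp (-t * W ω ^ 2)) P :=
  .of_bound (by fun_prop) 1 (ae_of_all _ fun ω => by
    rw [Real.norm_of_nonneg (Real.exp_nonneg _)]
    exact Real.exp_neg_mul_sq_le_one ht _)

theorem integral_exp_neg_mul_add_sq_le_of_indepFun_of_identDistrib {t : ℝ} (ht : 0 ≤ t)
    (hindep : IndepFun X Y P) (hid : IdentDistrib X Y P P) :
    ∫ ω, Real.exp (-t * (X ω + Y ω) ^ 2) ∂P ≤ ∫ ω, Real.exp (-t * (X ω - Y ω) ^ 2) ∂P := by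
  have hX := hid.aemeasurable_fst
  have hY := hid.aemeasurable_snd
  have hK := integral_nonneg_of_hasSum_mul_of_indepFun_of_identDistrib hindep hid
    (c := fun n => 2 * (2 * t) ^ (2 * n + 1) / (2 * n + 1)!)
    (g := fun n x => Real.exp (-t * x ^ 2) * x ^ (2 * n + 1)) (fun n => by positivity)
    (fun n => by fun_prop) (Real.hasSum_exp_neg_mul_sub_sq_sub_exp_neg_mul_add_sq t) one_ne_top
    (Real.tsum_enorm_exp_neg_mul_sq_series_le_one ht)
  rw [integral_sub (integrable_exp_neg_mul_sq_comp ht (W := fun ω => X ω - Y ω) (by fun_prop))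
    (integrable_exp_neg_mul_sq_comp ht (W := fun ω => X ω + Y ω) (by fun_prop))] at hK
  linarith

theorem lintegral_ofReal_one_sub_le_of_integral_le {f g : Ω → ℝ} (hf : Integrable f P)
    (hg : Integrable g P) (hf1 : ∀ ω, f ω ≤ 1) (hg1 : ∀ ω, g ω ≤ 1)
    (h : ∫ ω, g ω ∂P ≤ ∫ ω, f ω ∂P) :
    ∫⁻ ω, ENNReal.ofReal (1 - f ω) ∂P ≤ ∫⁻ ω, ENNReal.ofReal (1 - g ω) ∂P := by
  have hf' := integral_sub (integrable_const 1) hf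
  have hg' := integral_sub (integrable_const 1) hg
  rw [← ofReal_integral_eq_lintegral_ofReal (f := fun ω => 1 - f ω) ((integrable_const 1).sub hf)
      (ae_of_all _ fun ω => sub_nonneg.2 (hf1 ω)),
    ← ofReal_integral_eq_lintegral_ofReal (f := fun ω => 1 - g ω) ((integrable_const 1).sub hg)
      (ae_of_all _ fun ω => sub_nonneg.2 (hg1 ω)), hf', hg']
  exact ENNReal.ofReal_le_ofReal (by linarith)

theorem lintegral_ofReal_one_sub_exp_neg_mul_sub_sq_le {t : ℝ} (ht : 0 ≤ t)
    (hindep : IndepFun X Y P) (hid : IdentDistrib X Y P P) :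
    ∫⁻ ω, ENNReal.ofReal (1 - Real.exp (-t * (X ω - Y ω) ^ 2)) ∂P
      ≤ ∫⁻ ω, ENNReal.ofReal (1 - Real.exp (-t * (X ω + Y ω) ^ 2)) ∂P := by
  have hX := hid.aemeasurable_fst
  have hY := hid.aemeasurable_snd
  exact lintegral_ofReal_one_sub_le_of_integral_le
    (integrable_exp_neg_mul_sq_comp ht (W := fun ω => X ω - Y ω) (by fun_prop))
    (integrable_exp_neg_mul_sq_comp ht (W := fun ω => X ω + Y ω) (by fun_prop))
    (fun _ => Real.exp_neg_mul_sq_le_one ht _) (fun _ => Real.exp_neg_mul_sq_le_one ht _)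
    (integral_exp_neg_mul_add_sq_le_of_indepFun_of_identDistrib ht hindep hid)

end Gaussian

theorem bernstein_expectation_sub_le_expectation_add_general
    (a b : ℝ) (ha : 0 ≤ a) (hb : 0 ≤ b) (μ : Measure ℝ)
    (hμ : ∫⁻ t in Set.Ioi (0 : ℝ), ENNReal.ofReal (min t 1) ∂μ ≠ ⊤)
    (G F : ℝ → ℝ)
    (hG : ∀ l : ℝ, 0 ≤ l →
      G l = a + b * l + ∫ t in Set.Ioi (0 : ℝ), (1 - Real.exp (-t * l)) ∂μ)
    (hF : ∀ l : ℝ, 0 ≤ l → F l = G (l ^ 2))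
    {Ω : Type*} [MeasurableSpace Ω] (P : Measure Ω) [IsProbabilityMeasure P]
    (X Y : Ω → ℝ)
    (hindep : IndepFun X Y P) (hid : IdentDistrib X Y P P) :
    ∫⁻ ω, ENNReal.ofReal (F |X ω - Y ω|) ∂P
      ≤ ∫⁻ ω, ENNReal.ofReal (F |X ω + Y ω|) ∂P := by
  have hFG (r : ℝ) : F |r| = bernsteinFun a b μ (r ^ 2) := by
    rw [hF _ (abs_nonneg r), sq_abs, hG _ (sq_nonneg r), bernsteinFun]
  have hX := hid.aemeasurable_fst
  have hY := hid.aemeasurable_snd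
  simp only [hFG]
  exact lintegral_ofReal_bernsteinFun_comp_le hμ ha hb (by fun_prop) (by fun_prop)
    (fun _ => sq_nonneg _) (fun _ => sq_nonneg _)
    fun s hs => lintegral_ofReal_one_sub_exp_neg_mul_sub_sq_le hs.le hindep hid

/-- Let `G(λ) = a + bλ + ∫₀^∞ (1 − e^{−tλ}) μ(dt)` be a Bernstein function
(`a, b ≥ 0`, `∫₀^∞ min(t,1) μ(dt) < ∞`) and `F(λ) = G(λ²)`. Then for any pair of
i.i.d. real random variables `X, Y`, `E F(|X−Y|) ≤ E F(|X+Y|)` (both sides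
possibly `+∞`). -/
theorem bernstein_expectation_sub_le_expectation_add
    (a b : ℝ) (ha : 0 ≤ a) (hb : 0 ≤ b) (μ : Measure ℝ)
    (hμ : ∫⁻ t in Set.Ioi (0 : ℝ), ENNReal.ofReal (min t 1) ∂μ ≠ ⊤)
    (G F : ℝ → ℝ)
    (hG : ∀ l : ℝ, 0 ≤ l →
      G l = a + b * l + ∫ t in Set.Ioi (0 : ℝ), (1 - Real.exp (-t * l)) ∂μ)
    (hF : ∀ l : ℝ, 0 ≤ l → F l = G (l ^ 2))
    {Ω : Type*} [MeasurableSpace Ω] (P : Measure Ω) [IsProbabilityMeasure P]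
    (X Y : Ω → ℝ) (hX : Measurable X) (hY : Measurable Y)
    (hindep : IndepFun X Y P) (hid : IdentDistrib X Y P P) :
    ∫⁻ ω, ENNReal.ofReal (F |X ω - Y ω|) ∂P
      ≤ ∫⁻ ω, ENNReal.ofReal (F |X ω + Y ω|) ∂P :=
  bernstein_expectation_sub_le_expectation_add_general a b ha hb μ hμ G F hG hF P X Y hindep hid
end
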